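/- arXiv:1809.03089 — 2 statements merged into one kernel-verified Lean document; each statement's English description precedes it below -/
import Mathlib

section
/- Every degree-one function f on the multislice M_κ has a representation f = c + Σ_{j=1}^n Σ_{i=1}^ℓ c_{ji} x_{ji} in which Σ_{i=1}^ℓ c_{ji} = 0 for every j ∈ [n] and Σ_{j=1}^n c_{ji} = 0 for every i ∈ [ℓ], and this representation is unique: if two families of coefficients satisfying these constraints represent the same function on M_κ, then they are equal (including the constant terms). -/
open Finset

noncomputable section

/-- The multislice: vectors in `[ℓ]^n` whose colour counts are given by `κ`. -/
def multislice (ℓ n : ℕ) (κ : Fin ℓ → ℕ) : Finset (Fin n → Fin ℓ) :=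
  Finset.univ.filter fun u => ∀ i, (Finset.univ.filter fun j => u j = i).card = κ i

/-- Expectation with respect to the uniform measure on the multislice. -/
def msExp (ℓ n : ℕ) (κ : Fin ℓ → ℕ) (f : (Fin n → Fin ℓ) → ℝ) : ℝ :=
  (∑ u ∈ multislice ℓ n κ, f u) / ((multislice ℓ n κ).card : ℝ)

/-- The indicator variable `x_{ji}`. -/
def xvar (ℓ n : ℕ) (j : Fin n) (i : Fin ℓ) (u : Fin n → Fin ℓ) : ℝ :=
  if u j = i then 1 else 0

/-- A function on the multislice has degree one if it is of the form
`c + ∑_j ∑_i c_{ji} x_{ji}`. -/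
def degreeOne (ℓ n : ℕ) (κ : Fin ℓ → ℕ) (f : (Fin n → Fin ℓ) → ℝ) : Prop :=
  ∃ (c : ℝ) (coef : Fin n → Fin ℓ → ℝ), ∀ u ∈ multislice ℓ n κ,
    f u = c + ∑ j, ∑ i, coef j i * xvar ℓ n j i u

/-- Distance of a real number to the set `{0,1}`. -/
def dist01 (x : ℝ) : ℝ := min |x| |x - 1|

/-- A function is Boolean on the multislice if it takes values in `{0,1}` there. -/
def booleanOn (ℓ n : ℕ) (κ : Fin ℓ → ℕ) (g : (Fin n → Fin ℓ) → ℝ) : Prop :=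
  ∀ u ∈ multislice ℓ n κ, g u = 0 ∨ g u = 1

/-- A dictator: a function depending on at most one coordinate. -/
def dictator (ℓ n : ℕ) (κ : Fin ℓ → ℕ) (g : (Fin n → Fin ℓ) → ℝ) : Prop :=
  ∃ j : Fin n, ∀ u ∈ multislice ℓ n κ, ∀ v ∈ multislice ℓ n κ, u j = v j → g u = g v

/-!
On the multislice `∑ i, c j i * x j i` is just `c j (u j)`, so a degree-one function reads
`c + ∑ j, c j (u j)`. Existence: subtracting row means and then column means from the coefficient
matrix changes `∑ j, c j (u j)` only by a constant, because every colour `i` occurs exactly `κ i`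
times in `u`. Uniqueness: if `∑ j, d j (u j)` is constant on the multislice, comparing `u` with
`u ∘ swap j k` gives `d j (u j) + d k (u k) = d j (u k) + d k (u j)`. Summing over `k` with zero
column sums shows that `n * d j (u j)` does not depend on `u`; as every colour can be moved to
position `j`, the row `d j` is constant, hence zero since it sums to zero.
-/

open scoped BigOperators

section Centering

variable {ι σ : Type*}

def rowCenter [Fintype σ] (a : ι → σ → ℝ) (j : ι) (i : σ) : ℝ := a j i - 𝔼 i', a j i'

def colCenter [Fintype ι] (a : ι → σ → ℝ) (j : ι) (i : σ) : ℝ := a j i - 𝔼 j', a j' i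

lemma sum_sub_expect [Fintype σ] (g : σ → ℝ) : ∑ i, (g i - 𝔼 i', g i') = 0 := by
  rw [sum_sub_distrib, sum_const, card_univ, Fintype.card_smul_expect, sub_self]

lemma sum_rowCenter [Fintype σ] (a : ι → σ → ℝ) (j : ι) : ∑ i, rowCenter a j i = 0 :=
  sum_sub_expect _

lemma sum_colCenter [Fintype ι] (a : ι → σ → ℝ) (i : σ) : ∑ j, colCenter a j i = 0 :=
  sum_sub_expect _

lemma sum_colCenter_of_sum_eq_zero [Fintype ι] [Fintype σ] {a : ι → σ → ℝ}
    (ha : ∀ j, ∑ i, a j i = 0) (j : ι) : ∑ i, colCenter a j i = 0 := by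
  simp only [colCenter, sum_sub_distrib, ← expect_sum_comm, ha, expect_const_zero, sub_zero]

end Centering

lemma sum_apply_comp_swap {ι σ : Type*} [Fintype ι] [DecidableEq ι] (d : ι → σ → ℝ) (u : ι → σ)
    (j k : ι) :
    ∑ m, d m (u (Equiv.swap j k m)) + d j (u j) + d k (u k) =
      ∑ m, d m (u m) + d j (u k) + d k (u j) := by
  rcases eq_or_ne j k with rfl | hjk
  · simp
  have hout : ∀ m ∈ univ, m ∉ ({j, k} : Finset ι) →
      d m (u (Equiv.swap j k m)) - d m (u m) = 0 := fun m _ hm => by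
    rw [mem_insert, mem_singleton, not_or] at hm
    rw [Equiv.swap_apply_of_ne_of_ne hm.1 hm.2, sub_self]
  have := sum_subset (subset_univ _) hout
  rw [sum_pair hjk, Equiv.swap_apply_left, Equiv.swap_apply_right, sum_sub_distrib] at this
  linarith

section Multislice

variable {ℓ n : ℕ} {κ : Fin ℓ → ℕ}

lemma mem_multislice {u : Fin n → Fin ℓ} : u ∈ multislice ℓ n κ ↔ ∀ i, #{j | u j = i} = κ i := by
  simp [multislice]

lemma multislice_nonempty (hsum : ∑ i, κ i = n) : (multislice ℓ n κ).Nonempty := by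
  subst hsum
  refine ⟨fun j => (finSigmaFinEquiv.symm j).1, mem_multislice.2 fun i => ?_⟩
  rw [card_filter, ← finSigmaFinEquiv.sum_comp, Fintype.sum_sigma]
  simp

lemma comp_perm_mem_multislice {u : Fin n → Fin ℓ} (hu : u ∈ multislice ℓ n κ)
    (τ : Equiv.Perm (Fin n)) : u ∘ τ ∈ multislice ℓ n κ := by
  rw [mem_multislice] at hu ⊢
  intro i
  rw [← hu i]
  exact card_equiv τ (by simp)

lemma exists_mem_multislice_apply_eq (hsum : ∑ i, κ i = n) {i : Fin ℓ} (hi : 0 < κ i)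
    (j : Fin n) : ∃ u ∈ multislice ℓ n κ, u j = i := by
  obtain ⟨u, hu⟩ := multislice_nonempty hsum
  obtain ⟨k, hk⟩ : ({k | u k = i} : Finset (Fin n)).Nonempty := by
    rw [← card_pos, mem_multislice.1 hu i]; exact hi
  refine ⟨u ∘ Equiv.swap j k, comp_perm_mem_multislice hu _, ?_⟩
  simpa using hk

lemma sum_comp_eq_of_mem_multislice {u : Fin n → Fin ℓ} (hu : u ∈ multislice ℓ n κ)
    (g : Fin ℓ → ℝ) : ∑ j, g (u j) = ∑ i, κ i * g i := by
  rw [← sum_fiberwise' univ u g]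
  refine sum_congr rfl fun i _ => ?_
  rw [sum_const, mem_multislice.1 hu i, nsmul_eq_mul]

lemma sum_mul_xvar (a : Fin ℓ → ℝ) (j : Fin n) (u : Fin n → Fin ℓ) :
    ∑ i, a i * xvar ℓ n j i u = a (u j) := by
  simp [xvar]

lemma eq_zero_of_sum_apply_eq_const (hκ : ∀ i, 0 < κ i) (hsum : ∑ i, κ i = n)
    {d : Fin n → Fin ℓ → ℝ} (hrow : ∀ j, ∑ i, d j i = 0) (hcol : ∀ i, ∑ j, d j i = 0) {δ : ℝ}
    (hd : ∀ u ∈ multislice ℓ n κ, ∑ j, d j (u j) = δ) : d = 0 := by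
  have hswap : ∀ u ∈ multislice ℓ n κ, ∀ j k,
      d j (u j) + d k (u k) = d j (u k) + d k (u j) := fun u hu j k => by
    have hswapped := hd _ (comp_perm_mem_multislice hu (Equiv.swap j k))
    simp only [Function.comp_apply] at hswapped
    linarith [sum_apply_comp_swap d u j k, hd u hu]
  have hmul : ∀ u ∈ multislice ℓ n κ, ∀ j, n * d j (u j) = ∑ i', κ i' * d j i' - δ := by
    intro u hu j
    have := sum_congr rfl fun k (_ : k ∈ univ) => hswap u hu j k
    rw [sum_add_distrib, sum_add_distrib, sum_const, card_univ, Fintype.card_fin, nsmul_eq_mul,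
      hd u hu, hcol, sum_comp_eq_of_mem_multislice hu] at this
    linarith
  have hconst : ∀ j i, n * d j i = ∑ i', κ i' * d j i' - δ := fun j i => by
    obtain ⟨u, hu, rfl⟩ := exists_mem_multislice_apply_eq hsum (hκ i) j
    exact hmul u hu j
  funext j i
  have hn : (n : ℝ) ≠ 0 := Nat.cast_ne_zero.2 j.pos.ne'
  have hℓ : (ℓ : ℝ) ≠ 0 := Nat.cast_ne_zero.2 i.pos.ne'
  have : (ℓ : ℝ) * (n * d j i) = 0 := by
    calc (ℓ : ℝ) * (n * d j i) = ∑ i', n * d j i' := by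
          simp only [hconst j, sum_const, card_univ, Fintype.card_fin, nsmul_eq_mul]
      _ = 0 := by rw [← mul_sum, hrow, mul_zero]
  simpa [hn, hℓ] using this

lemma sum_colCenter_rowCenter_apply {u : Fin n → Fin ℓ} (hu : u ∈ multislice ℓ n κ)
    (a : Fin n → Fin ℓ → ℝ) :
    ∑ j, colCenter (rowCenter a) j (u j) =
      ∑ j, a j (u j) - ∑ j, 𝔼 i, a j i - ∑ i, κ i * 𝔼 j, rowCenter a j i := by
  rw [← sum_comp_eq_of_mem_multislice hu]
  simp only [colCenter, rowCenter, sum_sub_distrib]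

lemma eq_of_add_sum_apply_eq (hκ : ∀ i, 0 < κ i) (hsum : ∑ i, κ i = n) {c c' : ℝ}
    {a a' : Fin n → Fin ℓ → ℝ} (hrow : ∀ j, ∑ i, a j i = 0) (hcol : ∀ i, ∑ j, a j i = 0)
    (hrow' : ∀ j, ∑ i, a' j i = 0) (hcol' : ∀ i, ∑ j, a' j i = 0)
    (h : ∀ u ∈ multislice ℓ n κ, c + ∑ j, a j (u j) = c' + ∑ j, a' j (u j)) :
    c = c' ∧ a = a' := by
  have hsub : a - a' = 0 := by
    refine eq_zero_of_sum_apply_eq_const hκ hsum (δ := c' - c) (fun j => ?_) (fun i => ?_)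
      fun u hu => ?_
    · simp only [Pi.sub_apply, sum_sub_distrib, hrow, hrow', sub_self]
    · simp only [Pi.sub_apply, sum_sub_distrib, hcol, hcol', sub_self]
    · simp only [Pi.sub_apply, sum_sub_distrib]
      linarith [h u hu]
  rw [sub_eq_zero] at hsub
  obtain ⟨u, hu⟩ := multislice_nonempty hsum
  have hc := h u hu
  rw [hsub] at hc
  exact ⟨add_right_cancel hc, hsub⟩

end Multislice

theorem degreeOne_normal_form_general (ℓ n : ℕ) (κ : Fin ℓ → ℕ)
    (hκ : ∀ i, 0 < κ i) (hsum : ∑ i, κ i = n) (f : (Fin n → Fin ℓ) → ℝ)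
    (hf : degreeOne ℓ n κ f) :
    ∃! p : ℝ × (Fin n → Fin ℓ → ℝ),
      (∀ j, ∑ i, p.2 j i = 0) ∧ (∀ i, ∑ j, p.2 j i = 0) ∧
      ∀ u ∈ multislice ℓ n κ, f u = p.1 + ∑ j, ∑ i, p.2 j i * xvar ℓ n j i u := by
  obtain ⟨c, a, hfa⟩ := hf
  simp only [sum_mul_xvar] at hfa ⊢
  set c₀ := c + ∑ j, 𝔼 i, a j i + ∑ i, κ i * 𝔼 j, rowCenter a j i
  have hrow₀ := sum_colCenter_of_sum_eq_zero (sum_rowCenter a)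
  have hcol₀ := sum_colCenter (rowCenter a)
  have hrep₀ : ∀ u ∈ multislice ℓ n κ, f u = c₀ + ∑ j, colCenter (rowCenter a) j (u j) :=
    fun u hu => by
      rw [hfa u hu, sum_colCenter_rowCenter_apply hu]
      ring
  refine ⟨(c₀, colCenter (rowCenter a)), ⟨hrow₀, hcol₀, hrep₀⟩,
    fun ⟨c', a'⟩ ⟨hrow', hcol', hrep'⟩ => ?_⟩
  obtain ⟨rfl, rfl⟩ := eq_of_add_sum_apply_eq hκ hsum hrow' hcol' hrow₀ hcol₀
    fun u hu => (hrep' u hu).symm.trans (hrep₀ u hu)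
  rfl

/-- **Normal form for degree-one functions.**  Every degree-one function on the multislice has a
unique representation `f = c + ∑_j ∑_i c_{ji} x_{ji}` with all row sums `∑_i c_{ji}` and all
column sums `∑_j c_{ji}` equal to zero. -/
theorem degreeOne_normal_form (ℓ n : ℕ) (hℓ : 2 ≤ ℓ) (hn : 2 ≤ n) (κ : Fin ℓ → ℕ)
    (hκ : ∀ i, 0 < κ i) (hsum : ∑ i, κ i = n) (f : (Fin n → Fin ℓ) → ℝ)
    (hf : degreeOne ℓ n κ f) :
    ∃! p : ℝ × (Fin n → Fin ℓ → ℝ),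
      (∀ j, ∑ i, p.2 j i = 0) ∧ (∀ i, ∑ j, p.2 j i = 0) ∧
      ∀ u ∈ multislice ℓ n κ, f u = p.1 + ∑ j, ∑ i, p.2 j i * xvar ℓ n j i u :=
  degreeOne_normal_form_general ℓ n κ hκ hsum f hf
end
end

section
/- Let n ≥ 4 and for a partition λ of n define c_λ = (1/(n(n−1))) Σ_{i≥1} [λ_i² − (2i−1)λ_i]. Then c_{(n)} = 1, c_{(n−1,1)} = 1 − 2/(n−1), and for every partition λ of n other than (n) and (n−1,1) we have c_λ ≤ 1 − 4/n. -/
/-!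
`∑ᵢ λᵢ² - (2i-1)λᵢ` is twice the sum of the contents `j - i` of the boxes of the Young diagram
with rows `λ`. Deleting the first row `a` removes the contents `0, …, a-1` and lowers every
remaining content by one, which gives the recursion defining `twiceContentSum`; it holds for any
sequence of rows, sorted or not. Bounding the tail crudely by `s(s-1)` (all its boxes in one row)
leaves a convex function of the first row `a`, which for `1 ≤ a ≤ n-2` is at most its value
`(n-1)(n-4)` at the endpoints; the rows `a ∈ {n-1, n}` force `λ = (n-1,1)` or `λ = (n)`.
-/

open Finset

noncomputable section

/-- The eigenvalue `c_λ = (1/(n(n-1))) ∑_i [λ_i² - (2i-1) λ_i]` associated with a partition `λ`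
of `n`, where `λ_1 ≥ λ_2 ≥ ⋯` are the parts in non-increasing order. -/
def frobeniusEigenvalue (n : ℕ) (p : Nat.Partition n) : ℝ :=
  (1 / ((n : ℝ) * ((n : ℝ) - 1))) *
    ∑ i ∈ Finset.range (p.parts.sort (· ≥ ·)).length,
      (((p.parts.sort (· ≥ ·)).getD i 0 : ℝ) ^ 2
        - (2 * (i : ℝ) + 1) * ((p.parts.sort (· ≥ ·)).getD i 0 : ℝ))

def twiceContentSum : List ℕ → ℤ
  | [] => 0
  | a :: t => a * (a - 1) - 2 * t.sum + twiceContentSum t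

theorem sum_range_getD_eq_sum (l : List ℕ) :
    ∑ i ∈ range l.length, (l.getD i 0 : ℝ) = l.sum := by
  induction l with
  | nil => simp
  | cons a t ih =>
    rw [List.length_cons, sum_range_succ']
    simp only [List.getD_cons_succ, List.getD_cons_zero, ih, List.sum_cons, Nat.cast_add]
    ring

theorem sum_range_getD_eq_twiceContentSum (l : List ℕ) :
    ∑ i ∈ range l.length, ((l.getD i 0 : ℝ) ^ 2 - (2 * (i : ℝ) + 1) * l.getD i 0) =
      (twiceContentSum l : ℝ) := by
  induction l with
  | nil => simp [twiceContentSum]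
  | cons a t ih =>
    have shift : ∀ i : ℕ, (t.getD i 0 : ℝ) ^ 2 - (2 * ((i + 1 : ℕ) : ℝ) + 1) * t.getD i 0 =
        ((t.getD i 0 : ℝ) ^ 2 - (2 * (i : ℝ) + 1) * t.getD i 0) - 2 * t.getD i 0 := by
      intro i; push_cast; ring
    rw [List.length_cons, sum_range_succ']
    simp only [List.getD_cons_succ, List.getD_cons_zero, shift, sum_sub_distrib, ih,
      ← mul_sum, sum_range_getD_eq_sum, twiceContentSum]
    push_cast [-Nat.cast_list_sum]
    ring

theorem twiceContentSum_le (l : List ℕ) :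
    twiceContentSum l ≤ (l.sum : ℤ) * (l.sum - 1) := by
  induction l with
  | nil => simp [twiceContentSum]
  | cons a t ih =>
    simp only [twiceContentSum, List.sum_cons, Nat.cast_add]
    nlinarith [Int.natCast_nonneg a, Int.natCast_nonneg t.sum]

theorem twiceContentSum_cons_le {n a : ℕ} {t : List ℕ} (hsum : a + t.sum = n) (ha : 1 ≤ a)
    (han : a + 2 ≤ n) : twiceContentSum (a :: t) ≤ ((n : ℤ) - 1) * (n - 4) := by
  have htail : (t.sum : ℤ) = n - a := by omega
  have hrest := twiceContentSum_le t
  rw [htail] at hrest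
  simp only [twiceContentSum, htail]
  have ha' : (1 : ℤ) ≤ a := by exact_mod_cast ha
  have han' : (a : ℤ) + 2 ≤ n := by exact_mod_cast han
  nlinarith

theorem List.eq_nil_of_sum_eq_zero {l : List ℕ} (hpos : ∀ x ∈ l, 0 < x) (h : l.sum = 0) :
    l = [] := by
  cases l with
  | nil => rfl
  | cons b u => have := hpos b (by simp); simp at h; omega

theorem List.eq_singleton_one_of_sum_eq_one {l : List ℕ} (hpos : ∀ x ∈ l, 0 < x)
    (h : l.sum = 1) : l = [1] := by
  cases l with
  | nil => simp at h
  | cons b u =>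
    have hb := hpos b (by simp)
    have hu : u.sum = 0 := by simp at h; omega
    rw [List.eq_nil_of_sum_eq_zero (fun x hx => hpos x (by simp [hx])) hu]
    simp at h ⊢; omega

theorem twiceContentSum_le_of_ne {n : ℕ} {l : List ℕ} (hpos : ∀ x ∈ l, 0 < x) (hsum : l.sum = n)
    (h₁ : l ≠ [n]) (h₂ : l ≠ [n - 1, 1]) : twiceContentSum l ≤ ((n : ℤ) - 1) * (n - 4) := by
  match l with
  | [] =>
    subst hsum
    simp [twiceContentSum]
  | a :: t =>
    have ha := hpos a (by simp)
    have htpos : ∀ x ∈ t, 0 < x := fun x hx => hpos x (by simp [hx])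
    have hsum' : a + t.sum = n := by simpa using hsum
    rcases (by omega : a + 2 ≤ n ∨ a = n ∨ a = n - 1) with han | rfl | rfl
    · exact twiceContentSum_cons_le hsum' ha han
    · exact absurd (by rw [List.eq_nil_of_sum_eq_zero htpos (by omega)]) h₁
    · exact absurd (by rw [List.eq_singleton_one_of_sum_eq_one htpos (by omega)]) h₂

theorem frobeniusEigenvalue_eq (n : ℕ) (p : Nat.Partition n) :
    frobeniusEigenvalue n p = twiceContentSum (p.parts.sort (· ≥ ·)) / ((n : ℝ) * (n - 1)) := by
  rw [frobeniusEigenvalue, sum_range_getD_eq_twiceContentSum, one_div_mul_eq_div]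

/-- `c_{(n)} = 1`, `c_{(n-1,1)} = 1 - 2/(n-1)`, and `c_λ ≤ 1 - 4/n` for every other
partition `λ` of `n ≥ 4`. -/
theorem frobeniusEigenvalue_extreme (n : ℕ) (hn : 4 ≤ n) :
    (∀ p : Nat.Partition n, p.parts = {n} → frobeniusEigenvalue n p = 1) ∧
    (∀ p : Nat.Partition n, p.parts = {n - 1, 1} →
      frobeniusEigenvalue n p = 1 - 2 / ((n : ℝ) - 1)) ∧
    (∀ p : Nat.Partition n, p.parts ≠ {n} → p.parts ≠ {n - 1, 1} →
      frobeniusEigenvalue n p ≤ 1 - 4 / (n : ℝ)) := by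
  have hn' : (4 : ℝ) ≤ n := by exact_mod_cast hn
  have hn1 : (0 : ℝ) < n - 1 := by linarith
  refine ⟨fun p hp => ?_, fun p hp => ?_, fun p hp₁ hp₂ => ?_⟩
  · rw [frobeniusEigenvalue_eq, hp, Multiset.sort_singleton]
    simp only [twiceContentSum, List.sum_nil]
    push_cast
    field_simp
    ring
  · have hsort : p.parts.sort (· ≥ ·) = [n - 1, 1] := by
      rw [hp, Multiset.insert_eq_cons, Multiset.sort_cons _ _ _ (by simp; omega),
        Multiset.sort_singleton]
    rw [frobeniusEigenvalue_eq, hsort]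
    simp only [twiceContentSum, List.sum_nil, List.sum_cons]
    push_cast [Nat.cast_sub (by omega : 1 ≤ n)]
    field_simp
    ring
  · have hparts : ((p.parts.sort (· ≥ ·) : List ℕ) : Multiset ℕ) = p.parts := Multiset.sort_eq _ _
    have hbound := twiceContentSum_le_of_ne (l := p.parts.sort (· ≥ ·))
      (fun x hx => p.parts_pos (by rwa [← hparts, Multiset.mem_coe]))
      (by rw [← Multiset.sum_coe, hparts, p.parts_sum])
      (by rintro h; exact hp₁ (by rw [← hparts, h]; rfl))
      (by rintro h; exact hp₂ (by rw [← hparts, h]; rfl))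
    rw [frobeniusEigenvalue_eq, div_le_iff₀ (by positivity)]
    calc (twiceContentSum (p.parts.sort (· ≥ ·)) : ℝ) ≤ ((n : ℝ) - 1) * (n - 4) := by
          exact_mod_cast hbound
      _ = (1 - 4 / n) * (n * (n - 1)) := by field_simp
end
end
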